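/- arXiv:1504.03716 — 4 statements merged into one kernel-verified Lean document; each statement's English description precedes it below -/
import Mathlib

section
/- Let s ≥ 1 and let (h_ε)_{ε∈(0,1]} be a γ^s-moderate net of functions on ℝⁿ such that there exists a compact set K ⊂ ℝⁿ with supp h_ε ⊆ K for all ε ∈ (0,1]. Then there exist constants c, c′ > 0 and N ∈ ℕ such that |ĥ_ε(ξ)| ≤ c′ ε^{−N} exp(−c ε^{1/s} ⟨ξ⟩^{1/s}) for all ξ ∈ ℝⁿ and all ε ∈ (0,1]. -/
noncomputable section

open MeasureTheory Real Filter Finset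

/-- `ℝⁿ` as a Euclidean space. -/
abbrev Vn (n : ℕ) := EuclideanSpace ℝ (Fin n)

/-- Directional derivative along the `i`-th coordinate. -/
noncomputable def dirDeriv {n : ℕ} {F : Type*} [NormedAddCommGroup F] [NormedSpace ℝ F]
    (i : Fin n) (f : Vn n → F) : Vn n → F :=
  fun x => fderiv ℝ f x (EuclideanSpace.single i 1)

/-- Iterated partial derivative `∂^α` for a multi-index `α`. -/
noncomputable def multiDeriv {n : ℕ} {F : Type*} [NormedAddCommGroup F] [NormedSpace ℝ F]
    (α : Fin n → ℕ) (f : Vn n → F) : Vn n → F :=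
  (List.finRange n).foldr (fun i g => (dirDeriv i)^[α i] g) f

/-- `|α| = ∑ α i`. -/
def mOrder {n : ℕ} (α : Fin n → ℕ) : ℕ := ∑ i, α i

/-- `α! = ∏ (α i)!`. -/
def mFactorial {n : ℕ} (α : Fin n → ℕ) : ℕ := ∏ i, Nat.factorial (α i)

/-- Japanese bracket `⟨ξ⟩ = (1+|ξ|²)^{1/2}`. -/
noncomputable def jap {n : ℕ} (ξ : Vn n) : ℝ := Real.sqrt (1 + ‖ξ‖^2)

/-- The Gevrey class `γ^s(ℝⁿ)` (with values in a normed space): `f` is smooth and on every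
compact set `K` there is `C > 0` with `‖∂^α f(x)‖ ≤ C^{|α|+1} (α!)^s` on `K`. -/
def IsGevrey {n : ℕ} {F : Type*} [NormedAddCommGroup F] [NormedSpace ℝ F]
    (s : ℝ) (f : Vn n → F) : Prop :=
  ContDiff ℝ (⊤ : ℕ∞) f ∧ ∀ K : Set (Vn n), IsCompact K → ∃ C > 0, ∀ (α : Fin n → ℕ), ∀ x ∈ K,
    ‖multiDeriv α f x‖ ≤ C ^ (mOrder α + 1) * (mFactorial α : ℝ) ^ s

/-- A net `(h_ε)_{ε∈(0,1]}` in `γ^s(ℝⁿ)` is `γ^s`-moderate: for every compact `K` there are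
`c_K > 0` and `N ∈ ℕ` with `‖∂^α h_ε(x)‖ ≤ c_K^{|α|+1} (α!)^s ε^{−N−|α|}` for all `α`, `x ∈ K`,
`ε ∈ (0,1]`. -/
def GsModerate {n : ℕ} (s : ℝ) (h : ℝ → Vn n → ℂ) : Prop :=
  ∀ K : Set (Vn n), IsCompact K → ∃ c > (0:ℝ), ∃ N : ℕ,
    ∀ (α : Fin n → ℕ), ∀ x ∈ K, ∀ ε ∈ Set.Ioc (0:ℝ) 1,
      ‖multiDeriv α (h ε) x‖ ≤
        c ^ (mOrder α + 1) * (mFactorial α : ℝ) ^ s * ε ^ (-(N:ℝ) - (mOrder α : ℝ))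

/-! Differentiating `k` times along a largest coordinate of `ξ` and integrating over `K` gives
`(2π‖ξ‖)^k ‖ĥ_ε(ξ)‖ ≤ vol(K) c ε^{-N} (√n c / ε)^k (k!)^s` for every `k`. With
`t = 2π ε ‖ξ‖ / (√n c)` this says `t^k ‖ĥ_ε(ξ)‖ ≲ ε^{-N} (k!)^s`, and since `k! ≤ k^k` the choice
`k = ⌊t^{1/s} / e⌋` gives `(k!)^s ≤ t^k e^{1 - t^{1/s}/e}`. Finally `⟨ξ⟩^{1/s} ≤ 1 + ‖ξ‖^{1/s}`
turns the resulting `exp(-C (ε‖ξ‖)^{1/s})` into the claimed bound. -/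

open FourierTransform
open scoped ContDiff

theorem factorial_rpow_le_pow {s x : ℝ} (hs : 0 ≤ s) {k : ℕ} (hk : (k : ℝ) ^ s ≤ x) :
    (k.factorial : ℝ) ^ s ≤ x ^ k :=
  calc (k.factorial : ℝ) ^ s ≤ ((k : ℝ) ^ k) ^ s :=
        Real.rpow_le_rpow (Nat.cast_nonneg _) (mod_cast Nat.factorial_le_pow k) hs
    _ = ((k : ℝ) ^ s) ^ k := by
        rw [← Real.rpow_natCast, ← Real.rpow_mul (Nat.cast_nonneg _), mul_comm,
          Real.rpow_mul (Nat.cast_nonneg _), Real.rpow_natCast]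
    _ ≤ x ^ k := pow_le_pow_left₀ (by positivity) hk k

theorem exists_factorial_rpow_le {s t : ℝ} (hs : 1 ≤ s) (ht : 0 ≤ t) :
    ∃ k : ℕ, (k.factorial : ℝ) ^ s ≤ t ^ k * exp (1 - t ^ (1 / s) / exp 1) := by
  have hs0 : 0 < s := one_pos.trans_le hs
  set u := t ^ (1 / s)
  have hu : 0 ≤ u := by positivity
  refine ⟨⌊u / exp 1⌋₊, ?_⟩
  set k := ⌊u / exp 1⌋₊
  have hk : (k : ℝ) ^ s ≤ t / exp 1 :=
    calc (k : ℝ) ^ s ≤ (u / exp 1) ^ s :=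
          Real.rpow_le_rpow (Nat.cast_nonneg _) (Nat.floor_le (by positivity)) hs0.le
      _ = t / exp 1 ^ s := by
          rw [Real.div_rpow hu (exp_pos 1).le, ← Real.rpow_mul ht, one_div_mul_cancel hs0.ne',
            Real.rpow_one]
      _ ≤ t / exp 1 := by
          gcongr
          simpa using Real.rpow_le_rpow_of_exponent_le (one_le_exp zero_le_one) hs
  have hk1 : u / exp 1 < k + 1 := Nat.lt_floor_add_one _
  calc (k.factorial : ℝ) ^ s ≤ (t / exp 1) ^ k := factorial_rpow_le_pow hs0.le hk
    _ = t ^ k * exp (-k) := by rw [div_pow, ← exp_nat_mul, mul_one, exp_neg, div_eq_mul_inv]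
    _ ≤ t ^ k * exp (1 - u / exp 1) := by gcongr; linarith

theorem le_mul_exp_of_pow_mul_le_factorial_rpow {s t y B : ℝ} (hs : 1 ≤ s) (ht : 0 ≤ t)
    (hy : 0 ≤ y) (h : ∀ k : ℕ, t ^ k * y ≤ B * k.factorial ^ s) :
    y ≤ B * exp (1 - t ^ (1 / s) / exp 1) := by
  have hyB : y ≤ B := by simpa using h 0
  rcases ht.eq_or_lt with rfl | ht
  · rw [Real.zero_rpow (by positivity), zero_div, sub_zero]
    exact hyB.trans (le_mul_of_one_le_right (hy.trans hyB) (one_le_exp zero_le_one))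
  · obtain ⟨k, hk⟩ := exists_factorial_rpow_le hs ht.le
    refine le_of_mul_le_mul_left ?_ (pow_pos ht k)
    calc t ^ k * y ≤ B * k.factorial ^ s := h k
      _ ≤ B * (t ^ k * exp (1 - t ^ (1 / s) / exp 1)) := by gcongr; exact hy.trans hyB
      _ = t ^ k * (B * exp (1 - t ^ (1 / s) / exp 1)) := by ring

section IterateFoldr

variable {ι X : Type*} (T : ι → X → X) (x : X)

theorem List.foldr_iterate_eq_self {α : ι → ℕ} {l : List ι} (hl : ∀ j ∈ l, α j = 0) :
    l.foldr (fun j y => (T j)^[α j] y) x = x := by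
  induction l with
  | nil => rfl
  | cons a l ih =>
    simp [hl a List.mem_cons_self, ih fun j hj => hl j (List.mem_cons_of_mem a hj)]

theorem List.foldr_iterate_single [DecidableEq ι] (i : ι) (k : ℕ) {l : List ι} (hi : i ∈ l)
    (hl : l.Nodup) : l.foldr (fun j y => (T j)^[(Pi.single i k : ι → ℕ) j] y) x = (T i)^[k] x := by
  induction l with
  | nil => simp at hi
  | cons a l ih =>
    obtain ⟨hal, hl⟩ := List.nodup_cons.mp hl
    rcases eq_or_ne a i with rfl | hai
    · have htail : ∀ j ∈ l, (Pi.single a k : ι → ℕ) j = 0 := fun j hj => by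
        simp [ne_of_mem_of_not_mem hj hal]
      simp [List.foldr_iterate_eq_self T x htail]
    · have hil : i ∈ l := (List.mem_cons.mp hi).resolve_left hai.symm
      simp [ih hil hl, Pi.single_eq_of_ne hai]

end IterateFoldr

section MultiIndex

variable {n : ℕ} {F : Type*} [NormedAddCommGroup F] [NormedSpace ℝ F]

theorem multiDeriv_zero (f : Vn n → F) : multiDeriv 0 f = f :=
  List.foldr_iterate_eq_self _ f fun _ _ => rfl

theorem multiDeriv_single (i : Fin n) (k : ℕ) (f : Vn n → F) :
    multiDeriv (Pi.single i k) f = (dirDeriv i)^[k] f :=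
  List.foldr_iterate_single _ f i k (List.mem_finRange i) (List.nodup_finRange n)

@[simp] theorem mOrder_zero : mOrder (0 : Fin n → ℕ) = 0 := by simp [mOrder]

@[simp] theorem mFactorial_zero : mFactorial (0 : Fin n → ℕ) = 1 := by simp [mFactorial]

@[simp] theorem mOrder_single (i : Fin n) (k : ℕ) : mOrder (Pi.single i k) = k := by
  simp [mOrder]

@[simp] theorem mFactorial_single (i : Fin n) (k : ℕ) :
    mFactorial (Pi.single i k) = k.factorial := by
  rw [mFactorial, Finset.prod_eq_single i (fun j _ hj => by simp [Pi.single_eq_of_ne hj])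
    (fun hi => absurd (Finset.mem_univ i) hi)]
  simp

theorem ContDiff.dirDeriv (i : Fin n) {f : Vn n → F} (hf : ContDiff ℝ ∞ f) :
    ContDiff ℝ ∞ (dirDeriv i f) :=
  (hf.fderiv_right le_rfl).clm_apply contDiff_const

theorem ContDiff.iterate_dirDeriv (i : Fin n) (k : ℕ) {f : Vn n → F} (hf : ContDiff ℝ ∞ f) :
    ContDiff ℝ ∞ ((_root_.dirDeriv i)^[k] f) := by
  induction k with
  | zero => exact hf
  | succ k ih => rw [Function.iterate_succ_apply']; exact ih.dirDeriv i

theorem tsupport_dirDeriv_subset (i : Fin n) (f : Vn n → F) :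
    tsupport (dirDeriv i f) ⊆ tsupport f := by
  refine closure_minimal (fun x hx => support_fderiv_subset ℝ fun h0 => hx ?_) isClosed_closure
  simp [dirDeriv, h0]

theorem tsupport_iterate_dirDeriv_subset (i : Fin n) (k : ℕ) (f : Vn n → F) :
    tsupport ((dirDeriv i)^[k] f) ⊆ tsupport f := by
  induction k with
  | zero => exact subset_rfl
  | succ k ih =>
    rw [Function.iterate_succ_apply']
    exact (tsupport_dirDeriv_subset i _).trans ih

theorem HasCompactSupport.iterate_dirDeriv (i : Fin n) (k : ℕ) {f : Vn n → F}
    (hf : HasCompactSupport f) : HasCompactSupport ((dirDeriv i)^[k] f) :=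
  hf.of_isClosed_subset isClosed_closure (tsupport_iterate_dirDeriv_subset i k f)

end MultiIndex

section Fourier

variable {E : Type*} [NormedAddCommGroup E] [NormedSpace ℂ E]

theorem norm_fourier_le_measureReal_mul {V : Type*} [NormedAddCommGroup V]
    [InnerProductSpace ℝ V] [MeasurableSpace V] [BorelSpace V] [FiniteDimensional ℝ V]
    {g : V → E} {K : Set V} {C : ℝ} (hK : volume K < ⊤) (hgK : Function.support g ⊆ K)
    (hC : ∀ x ∈ K, ‖g x‖ ≤ C) (ξ : V) : ‖𝓕 g ξ‖ ≤ volume.real K * C := by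
  have hzero : ∀ x ∉ K, ‖g x‖ = 0 := fun x hx => by
    simpa using Function.notMem_support.mp fun h => hx (hgK h)
  calc ‖𝓕 g ξ‖ ≤ ∫ x, ‖g x‖ := VectorFourier.norm_fourierIntegral_le_integral_norm _ _ _ _ _
    _ = ∫ x in K, ‖g x‖ := (setIntegral_eq_integral_of_forall_compl_eq_zero hzero).symm
    _ ≤ C * volume.real K := (le_abs_self _).trans <| by
      simpa using norm_setIntegral_le_of_norm_le_const hK (f := fun x => ‖g x‖)
        fun x hx => by simpa using hC x hx
    _ = volume.real K * C := mul_comm _ _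

variable {n : ℕ}

theorem fourier_dirDeriv {f : Vn n → E} (hf : ContDiff ℝ 1 f) (hc : HasCompactSupport f)
    (i : Fin n) (ξ : Vn n) :
    𝓕 (dirDeriv i f) ξ = (2 * π * Complex.I * ξ i) • 𝓕 f ξ := by
  have hint : Integrable f := hf.continuous.integrable_of_hasCompactSupport hc
  have hint' : Integrable (fderiv ℝ f) :=
    (hf.continuous_fderiv one_ne_zero).integrable_of_hasCompactSupport (hc.fderiv (𝕜 := ℝ))
  unfold dirDeriv
  rw [← Real.fourier_continuousLinearMap_apply hint',
    Real.fourier_fderiv hint (hf.differentiable one_ne_zero) hint']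
  have hinner : innerSL ℝ ξ (EuclideanSpace.single i 1) = ξ i := by
    simp [EuclideanSpace.inner_single_right]
  simp only [VectorFourier.fourierSMulRight_apply, neg_apply, hinner,
    ← Complex.coe_smul, smul_smul]
  congr 1
  push_cast
  ring

theorem fourier_iterate_dirDeriv {f : Vn n → E} (hf : ContDiff ℝ ∞ f) (hc : HasCompactSupport f)
    (i : Fin n) (k : ℕ) (ξ : Vn n) :
    𝓕 ((dirDeriv i)^[k] f) ξ = (2 * π * Complex.I * ξ i) ^ k • 𝓕 f ξ := by
  induction k with
  | zero => simp
  | succ k ih =>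
    rw [Function.iterate_succ_apply', fourier_dirDeriv ((hf.iterate_dirDeriv i k).of_le
      (by simp)) (hc.iterate_dirDeriv i k), ih, smul_smul, pow_succ']

theorem norm_fourier_iterate_dirDeriv {f : Vn n → E} (hf : ContDiff ℝ ∞ f)
    (hc : HasCompactSupport f) (i : Fin n) (k : ℕ) (ξ : Vn n) :
    ‖𝓕 ((dirDeriv i)^[k] f) ξ‖ = (2 * π * |ξ i|) ^ k * ‖𝓕 f ξ‖ := by
  rw [fourier_iterate_dirDeriv hf hc, norm_smul, norm_pow]
  simp [abs_of_pos pi_pos]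

end Fourier

theorem EuclideanSpace.exists_norm_le_sqrt_card_mul_abs {ι : Type*} [Fintype ι] [Nonempty ι]
    (x : EuclideanSpace ℝ ι) : ∃ i, ‖x‖ ≤ √(Fintype.card ι) * |x i| := by
  obtain ⟨i, -, hi⟩ := Finset.exists_max_image Finset.univ (fun j => |x j|) Finset.univ_nonempty
  refine ⟨i, ?_⟩
  rw [EuclideanSpace.norm_eq, ← Real.sqrt_sq (abs_nonneg (x i)), ← Real.sqrt_mul (by positivity)]
  refine Real.sqrt_le_sqrt ?_
  calc ∑ j, ‖x j‖ ^ 2 ≤ ∑ _j : ι, |x i| ^ 2 := Finset.sum_le_sum fun j _ => by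
        simpa using pow_le_pow_left₀ (abs_nonneg _) (hi j (Finset.mem_univ j)) 2
    _ = Fintype.card ι * |x i| ^ 2 := by simp

section Decay

variable {n : ℕ} {E : Type*} [NormedAddCommGroup E] [NormedSpace ℂ E]

theorem pow_mul_norm_fourier_le {s A B : ℝ} {f : Vn n → E} {K : Set (Vn n)}
    (hf : ContDiff ℝ ∞ f) (hK : IsCompact K) (hfK : tsupport f ⊆ K) (hA : 0 ≤ A) (hB : 0 ≤ B)
    (hbound : ∀ α : Fin n → ℕ, ∀ x ∈ K, ‖multiDeriv α f x‖ ≤ A * B ^ mOrder α * mFactorial α ^ s)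
    (ξ : Vn n) (k : ℕ) :
    (2 * π * ‖ξ‖) ^ k * ‖𝓕 f ξ‖ ≤ volume.real K * A * (√n * B) ^ k * k.factorial ^ s := by
  have hc : HasCompactSupport f := hK.of_isClosed_subset isClosed_closure hfK
  rcases eq_or_ne ξ 0 with rfl | hξ
  · cases k with
    | zero =>
      simpa using norm_fourier_le_measureReal_mul hK.measure_lt_top
        ((subset_tsupport f).trans hfK)
        (fun x hx => by simpa [multiDeriv_zero] using hbound 0 x hx) 0
    | succ k =>
      simp only [norm_zero, mul_zero, zero_pow k.succ_ne_zero, zero_mul]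
      positivity
  · have : Nonempty (Fin n) := by
      by_contra h
      rw [not_nonempty_iff] at h
      exact hξ (by ext i; exact isEmptyElim i)
    obtain ⟨i, hi⟩ := EuclideanSpace.exists_norm_le_sqrt_card_mul_abs ξ
    rw [Fintype.card_fin] at hi
    have hξi : 2 * π * ‖ξ‖ ≤ √n * (2 * π * |ξ i|) :=
      (mul_le_mul_of_nonneg_left hi (by positivity)).trans_eq (by ring)
    calc (2 * π * ‖ξ‖) ^ k * ‖𝓕 f ξ‖ ≤ (√n * (2 * π * |ξ i|)) ^ k * ‖𝓕 f ξ‖ := by gcongr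
      _ = √n ^ k * ((2 * π * |ξ i|) ^ k * ‖𝓕 f ξ‖) := by ring
      _ = √n ^ k * ‖𝓕 ((dirDeriv i)^[k] f) ξ‖ := by rw [norm_fourier_iterate_dirDeriv hf hc]
      _ ≤ √n ^ k * (volume.real K * (A * B ^ k * k.factorial ^ s)) := by
          gcongr
          refine norm_fourier_le_measureReal_mul hK.measure_lt_top
            ((subset_tsupport _).trans ((tsupport_iterate_dirDeriv_subset i k f).trans hfK))
            (fun x hx => ?_) ξ
          simpa [multiDeriv_single] using hbound (Pi.single i k) x hx
      _ = volume.real K * A * (√n * B) ^ k * k.factorial ^ s := by ring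

theorem norm_fourier_le_exp_of_multiDeriv_le {s A B L : ℝ} {f : Vn n → E} {K : Set (Vn n)}
    (hs : 1 ≤ s) (hf : ContDiff ℝ ∞ f) (hK : IsCompact K) (hfK : tsupport f ⊆ K) (hA : 0 ≤ A)
    (hB : 0 ≤ B) (hL : 0 < L) (hBL : √n * B ≤ L)
    (hbound : ∀ α : Fin n → ℕ, ∀ x ∈ K, ‖multiDeriv α f x‖ ≤ A * B ^ mOrder α * mFactorial α ^ s)
    (ξ : Vn n) :
    ‖𝓕 f ξ‖ ≤ volume.real K * A * exp (1 - (2 * π * ‖ξ‖ / L) ^ (1 / s) / exp 1) := by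
  refine le_mul_exp_of_pow_mul_le_factorial_rpow hs (by positivity) (norm_nonneg _) fun k => ?_
  rw [div_pow, div_mul_eq_mul_div, div_le_iff₀ (by positivity)]
  calc (2 * π * ‖ξ‖) ^ k * ‖𝓕 f ξ‖ ≤ volume.real K * A * (√n * B) ^ k * k.factorial ^ s :=
        pow_mul_norm_fourier_le hf hK hfK hA hB hbound ξ k
    _ ≤ volume.real K * A * L ^ k * k.factorial ^ s := by gcongr
    _ = volume.real K * A * k.factorial ^ s * L ^ k := by ring

theorem jap_le_one_add_norm (ξ : Vn n) : jap ξ ≤ 1 + ‖ξ‖ := by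
  rw [jap, ← Real.sqrt_sq (by positivity : (0 : ℝ) ≤ 1 + ‖ξ‖)]
  exact Real.sqrt_le_sqrt (by nlinarith [norm_nonneg ξ])

theorem mul_rpow_mul_jap_rpow_le {s μ ε : ℝ} (hs : 1 ≤ s) (hμ : 0 ≤ μ) (hε : 0 ≤ ε)
    (hε1 : ε ≤ 1) (ξ : Vn n) :
    μ ^ (1 / s) * ε ^ (1 / s) * jap ξ ^ (1 / s) ≤ μ ^ (1 / s) + (μ * ε * ‖ξ‖) ^ (1 / s) := by
  have hp : 0 ≤ 1 / s := by positivity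
  have hp1 : 1 / s ≤ 1 := by rw [div_le_one (by linarith)]; exact hs
  have hjap : jap ξ ^ (1 / s) ≤ 1 + ‖ξ‖ ^ (1 / s) :=
    (Real.rpow_le_rpow (Real.sqrt_nonneg _) (jap_le_one_add_norm ξ) hp).trans
      (by simpa using Real.rpow_add_le_add_rpow zero_le_one (norm_nonneg ξ) hp hp1)
  calc μ ^ (1 / s) * ε ^ (1 / s) * jap ξ ^ (1 / s)
        ≤ μ ^ (1 / s) * ε ^ (1 / s) * (1 + ‖ξ‖ ^ (1 / s)) := by gcongr
    _ = μ ^ (1 / s) * ε ^ (1 / s) + (μ * ε * ‖ξ‖) ^ (1 / s) := by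
        rw [Real.mul_rpow (by positivity) (norm_nonneg _), Real.mul_rpow hμ hε]; ring
    _ ≤ μ ^ (1 / s) + (μ * ε * ‖ξ‖) ^ (1 / s) := by
        gcongr
        exact mul_le_of_le_one_right (by positivity) (Real.rpow_le_one hε hε1 hp)

theorem exp_one_sub_rpow_le {s μ ε : ℝ} (hs : 1 ≤ s) (hμ : 0 ≤ μ) (hε : 0 ≤ ε) (hε1 : ε ≤ 1)
    (ξ : Vn n) :
    exp (1 - (μ * ε * ‖ξ‖) ^ (1 / s) / exp 1) ≤
      exp (1 + μ ^ (1 / s) / exp 1)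
        * exp (-(μ ^ (1 / s) / exp 1) * ε ^ (1 / s) * jap ξ ^ (1 / s)) := by
  rw [← exp_add, exp_le_exp]
  have h := div_le_div_of_nonneg_right (mul_rpow_mul_jap_rpow_le hs hμ hε hε1 ξ) (exp_pos 1).le
  rw [add_div] at h
  have hc : -(μ ^ (1 / s) / exp 1) * ε ^ (1 / s) * jap ξ ^ (1 / s)
      = -(μ ^ (1 / s) * ε ^ (1 / s) * jap ξ ^ (1 / s) / exp 1) := by ring
  linarith

end Decay

theorem GsModerate.exists_norm_multiDeriv_le {n : ℕ} {s : ℝ} {h : ℝ → Vn n → ℂ}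
    (hmod : GsModerate s h) {K : Set (Vn n)} (hK : IsCompact K) :
    ∃ c > (0 : ℝ), ∃ N : ℕ, ∀ ε ∈ Set.Ioc (0 : ℝ) 1, ∀ α : Fin n → ℕ, ∀ x ∈ K,
      ‖multiDeriv α (h ε) x‖ ≤ c * ε ^ (-(N : ℝ)) * (c / ε) ^ mOrder α * mFactorial α ^ s := by
  obtain ⟨c, hc, N, hbound⟩ := hmod K hK
  refine ⟨c, hc, N, fun ε hε α x hx => (hbound α x hx ε hε).trans_eq ?_⟩
  rw [Real.rpow_sub hε.1, Real.rpow_natCast, div_pow, pow_succ]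
  field_simp

/-- Let `s ≥ 1` and let `(h_ε)_{ε∈(0,1]}` be a `γ^s`-moderate net of Gevrey
functions on `ℝⁿ`, all supported in a fixed compact set `K`. Then there are `c, c' > 0` and
`N ∈ ℕ` with `|ĥ_ε(ξ)| ≤ c' ε^{−N} exp(−c ε^{1/s} ⟨ξ⟩^{1/s})` for all `ξ` and `ε ∈ (0,1]`. -/
theorem gsModerate_fourier_decay
    (n : ℕ) (s : ℝ) (hs : 1 ≤ s) (h : ℝ → Vn n → ℂ)
    (hsmooth : ∀ ε ∈ Set.Ioc (0:ℝ) 1, IsGevrey s (h ε))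
    (hmod : GsModerate s h)
    (K : Set (Vn n)) (hK : IsCompact K)
    (hsupp : ∀ ε ∈ Set.Ioc (0:ℝ) 1, tsupport (h ε) ⊆ K) :
    ∃ c > (0:ℝ), ∃ c' > (0:ℝ), ∃ N : ℕ, ∀ ε ∈ Set.Ioc (0:ℝ) 1, ∀ ξ : Vn n,
      ‖FourierTransform.fourier (h ε) ξ‖ ≤
        c' * ε ^ (-(N:ℝ)) * Real.exp (-c * ε ^ (1/s) * jap ξ ^ (1/s)) := by
  obtain ⟨c₀, hc₀, N, hbound⟩ := hmod.exists_norm_multiDeriv_le hK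
  -- `max … 1` keeps `L` positive when `n = 0`
  set L := max (√n * c₀) 1
  have hL : 0 < L := lt_max_of_lt_right one_pos
  set μ := 2 * π / L
  set c := μ ^ (1 / s) / exp 1
  refine ⟨c, by positivity, (volume.real K + 1) * c₀ * exp (1 + c), by positivity, N,
    fun ε hε ξ => ?_⟩
  have hε0 : 0 < ε := hε.1
  have hdecay := norm_fourier_le_exp_of_multiDeriv_le (L := L / ε) hs (hsmooth ε hε).1 hK
    (hsupp ε hε) (by positivity) (by positivity) (by positivity)
    (by rw [mul_div_assoc']; gcongr; exact le_max_left _ _) (hbound ε hε) ξ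
  rw [show 2 * π * ‖ξ‖ / (L / ε) = μ * ε * ‖ξ‖ by simp only [μ]; field_simp] at hdecay
  calc ‖𝓕 (h ε) ξ‖
      ≤ volume.real K * (c₀ * ε ^ (-(N : ℝ))) * exp (1 - (μ * ε * ‖ξ‖) ^ (1 / s) / exp 1) :=
        hdecay
    _ ≤ volume.real K * (c₀ * ε ^ (-(N : ℝ)))
          * (exp (1 + c) * exp (-c * ε ^ (1 / s) * jap ξ ^ (1 / s))) := by
        gcongr
        exact exp_one_sub_rpow_le hs (by positivity) hε0.le hε.2 ξ
    _ = volume.real K * c₀ * exp (1 + c) * ε ^ (-(N : ℝ))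
          * exp (-c * ε ^ (1 / s) * jap ξ ^ (1 / s)) := by ring
    _ ≤ (volume.real K + 1) * c₀ * exp (1 + c) * ε ^ (-(N : ℝ))
          * exp (-c * ε ^ (1 / s) * jap ξ ^ (1 / s)) := by gcongr; linarith
end
end

section
/- Let λ_1(t,ξ),…,λ_m(t,ξ) be real-valued functions on [0,T]×(ℝⁿ∖{0}), compactly supported and bounded in t, continuous and homogeneous of order 1 in ξ, and let λ_{j,ε}(t,ξ) be smooth-in-t regularisations satisfying: for every k ∈ ℕ there exists c > 0 with |d_t^k λ_{j,ε}(t,ξ)| ≤ c ε^{−k}|ξ| for all t ∈ [0,T], ξ ≠ 0, ε ∈ (0,1], and each λ_{j,ε}(·,ξ) is homogeneous of order 1 in ξ. Define functions a_{ν,j,ε}(t), for multi-indices ν with |ν| = j, j = 1,…,m, by the identity −Σ_{|ν|=j} a_{ν,j,ε}(t) ξ^ν = σ_j^{(m)}(λ_ε)(t,ξ) for all ξ, where σ_h^{(m)}(λ_ε) = (−1)^h Σ_{1≤i_1<…<i_h≤m} λ_{i_1,ε}⋯λ_{i_h,ε}. Then every net (a_{ν,j,ε})_ε is C^∞-moderate: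 for all k ∈ ℕ there exist N ∈ ℕ and c > 0 such that |d_t^k a_{ν,j,ε}(t)| ≤ c ε^{−N} for all t ∈ [0,T] and ε ∈ (0,1]. -/
noncomputable section

open MeasureTheory Real Filter Finset

/-!
The monomials `ξ ^ ν` with `|ν| = j` are linearly independent functions of `ξ`, so the coordinate
`a_{ν,j,ε}(t)` is one fixed linear combination of the values `σ_j(λ_ε)(t, ξ_x)` at finitely many
points `ξ_x`, independent of `ε` and `t`. Each `λ_{i,ε}(·, ξ_x)` has derivatives of order `≤ k`
bounded by `O(ε^{-k})`, and by the Leibniz rule a product of `j` of them has derivatives of order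
`≤ k` bounded by `O(ε^{-jk})`; linear combinations keep such bounds.
-/

theorem linearIndependent_prod_pow {σ K : Type*} [Fintype σ] [Field K] [Infinite K] :
    LinearIndependent K (fun (μ : σ → ℕ) (x : σ → K) => ∏ i, x i ^ μ i) := by
  let evalFun : MvPolynomial σ K →ₗ[K] (σ → K) → K :=
    LinearMap.pi fun x => (MvPolynomial.aeval x).toLinearMap
  have hker : LinearMap.ker evalFun = ⊥ :=
    LinearMap.ker_eq_bot'.mpr fun p hp => MvPolynomial.funext fun x => by
      simpa [evalFun] using congrFun hp x
  have hmon : (fun (μ : σ → ℕ) (x : σ → K) => ∏ i, x i ^ μ i) =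
      evalFun ∘ MvPolynomial.basisMonomials σ K ∘ Finsupp.equivFunOnFinite.symm := by
    funext μ x
    simp [evalFun, MvPolynomial.coe_basisMonomials, MvPolynomial.aeval_monomial,
      Finsupp.prod_fintype]
  rw [hmon]
  exact ((MvPolynomial.basisMonomials σ K).linearIndependent.map' evalFun hker).comp _
    (Equiv.injective _)

theorem exists_coeff_eq_sum_eval {σ K : Type*} [Fintype σ] [Field K] [Infinite K]
    (A : Finset (σ → ℕ)) {ν : σ → ℕ} (hν : ν ∈ A) :
    ∃ (s : Finset (σ → K)) (w : (σ → K) → K), ∀ c : (σ → ℕ) → K,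
      c ν = ∑ x ∈ s, w x * ∑ μ ∈ A, c μ * ∏ i, x i ^ μ i := by
  have hspan := span_flip_eq_top_iff_linearIndependent.mpr
    ((linearIndependent_prod_pow (σ := σ) (K := K)).comp ((↑) : A → σ → ℕ) Subtype.val_injective)
  obtain ⟨w, hw⟩ := Finsupp.mem_span_range_iff_exists_finsupp.mp
    (hspan ▸ Submodule.mem_top (x := Pi.single (⟨ν, hν⟩ : A) (1 : K)))
  refine ⟨w.support, w, fun c => ?_⟩
  calc c ν = ∑ μ : A, c μ * (Pi.single (⟨ν, hν⟩ : A) (1 : K) : A → K) μ := by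
        simp [Pi.single_apply]
    _ = ∑ μ : A, c μ * ∑ x ∈ w.support, w x * ∏ i, x i ^ (μ : σ → ℕ) i := by
        simp [← hw, Finsupp.sum, flip]
    _ = ∑ x ∈ w.support, w x * ∑ μ ∈ A, c μ * ∏ i, x i ^ μ i := by
        simp only [mul_sum]
        rw [sum_comm]
        refine sum_congr rfl fun x _ => ?_
        rw [← sum_coe_sort A]
        exact sum_congr rfl fun μ _ => mul_left_comm _ _ _

/-- The paper's `C^∞`-moderateness of the net `(f ε)_{ε ∈ (0,1]}` on `s` is
`∀ k, ∃ N, ModerateUpTo k N s f`. -/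
structure ModerateUpTo (k N : ℕ) (s : Set ℝ) (f : ℝ → ℝ → ℝ) : Prop where
  contDiff : ∀ ε ∈ Set.Ioc (0:ℝ) 1, ContDiff ℝ (⊤ : ℕ∞) (f ε)
  exists_bound : ∃ c : ℝ, ∀ ε ∈ Set.Ioc (0:ℝ) 1, ∀ t ∈ s, ∀ l ≤ k,
    |iteratedDeriv l (f ε) t| ≤ c * ε ^ (-(N:ℝ))

namespace ModerateUpTo

variable {k N N' : ℕ} {s : Set ℝ} {f g : ℝ → ℝ → ℝ}

theorem congr (hf : ModerateUpTo k N s f) (hfg : ∀ ε ∈ Set.Ioc (0:ℝ) 1, f ε = g ε) :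
    ModerateUpTo k N s g where
  contDiff ε hε := hfg ε hε ▸ hf.contDiff ε hε
  exists_bound := by
    obtain ⟨c, hc⟩ := hf.exists_bound
    exact ⟨c, fun ε hε => hfg ε hε ▸ hc ε hε⟩

theorem one : ModerateUpTo k 0 s (fun _ _ => 1) where
  contDiff _ _ := contDiff_const
  exists_bound := ⟨1, fun ε _ t _ l _ => by
    rw [iteratedDeriv_const]
    split_ifs <;> simp⟩

theorem const_mul (hf : ModerateUpTo k N s f) (a : ℝ) :
    ModerateUpTo k N s (fun ε t => a * f ε t) where
  contDiff ε hε := contDiff_const.mul (hf.contDiff ε hε)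
  exists_bound := by
    obtain ⟨c, hc⟩ := hf.exists_bound
    refine ⟨|a| * c, fun ε hε t ht l hl => ?_⟩
    rw [iteratedDeriv_const_mul_field, abs_mul, mul_assoc]
    exact mul_le_mul_of_nonneg_left (hc ε hε t ht l hl) (abs_nonneg a)

theorem sum {ι : Type*} {u : Finset ι} {f : ι → ℝ → ℝ → ℝ}
    (hf : ∀ i ∈ u, ModerateUpTo k N s (f i)) :
    ModerateUpTo k N s (fun ε t => ∑ i ∈ u, f i ε t) where
  contDiff ε hε := ContDiff.sum fun i hi => (hf i hi).contDiff ε hε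
  exists_bound := by
    choose! c hc using fun i hi => (hf i hi).exists_bound
    refine ⟨∑ i ∈ u, c i, fun ε hε t ht l hl => ?_⟩
    rw [iteratedDeriv_fun_sum fun i hi => ((hf i hi).contDiff ε hε).contDiffAt.of_le
      (by exact_mod_cast le_top), sum_mul]
    exact (abs_sum_le_sum_abs _ _).trans (sum_le_sum fun i hi => hc i hi ε hε t ht l hl)

theorem mul (hf : ModerateUpTo k N s f) (hg : ModerateUpTo k N' s g) :
    ModerateUpTo k (N + N') s (fun ε t => f ε t * g ε t) where
  contDiff ε hε := (hf.contDiff ε hε).mul (hg.contDiff ε hε)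
  exists_bound := by
    obtain ⟨c, hc⟩ := hf.exists_bound
    obtain ⟨c', hc'⟩ := hg.exists_bound
    refine ⟨2 ^ k * (c * c'), fun ε hε t ht l hl => ?_⟩
    have hB : 0 ≤ c * ε ^ (-(N:ℝ)) := (abs_nonneg _).trans (hc ε hε t ht 0 (Nat.zero_le k))
    have hB' : 0 ≤ c' * ε ^ (-(N':ℝ)) := (abs_nonneg _).trans (hc' ε hε t ht 0 (Nat.zero_le k))
    have hterm : ∀ i ∈ range (l + 1),
        |(l.choose i : ℝ) * iteratedDeriv i (f ε) t * iteratedDeriv (l - i) (g ε) t| ≤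
          l.choose i * (c * ε ^ (-(N:ℝ)) * (c' * ε ^ (-(N':ℝ)))) := by
      intro i hi
      have hil : i ≤ l := Nat.lt_succ_iff.mp (mem_range.mp hi)
      rw [abs_mul, abs_mul, Nat.abs_cast, mul_assoc]
      exact mul_le_mul_of_nonneg_left (mul_le_mul (hc ε hε t ht i (hil.trans hl))
        (hc' ε hε t ht (l - i) ((Nat.sub_le l i).trans hl)) (abs_nonneg _) hB) (Nat.cast_nonneg _)
    have hεN : ε ^ (-(N:ℝ)) * ε ^ (-(N':ℝ)) = ε ^ (-((N + N' : ℕ) : ℝ)) := by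
      rw [← Real.rpow_add hε.1]; push_cast; ring_nf
    calc |iteratedDeriv l (fun t => f ε t * g ε t) t|
        ≤ ∑ i ∈ range (l + 1), l.choose i * (c * ε ^ (-(N:ℝ)) * (c' * ε ^ (-(N':ℝ)))) := by
          rw [iteratedDeriv_fun_mul ((hf.contDiff ε hε).contDiffAt.of_le (by exact_mod_cast le_top))
            ((hg.contDiff ε hε).contDiffAt.of_le (by exact_mod_cast le_top))]
          exact (abs_sum_le_sum_abs _ _).trans (sum_le_sum hterm)
      _ = 2 ^ l * (c * ε ^ (-(N:ℝ)) * (c' * ε ^ (-(N':ℝ)))) := by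
          rw [← sum_mul, ← Nat.cast_sum, Nat.sum_range_choose, Nat.cast_pow, Nat.cast_ofNat]
      _ ≤ 2 ^ k * (c * ε ^ (-(N:ℝ)) * (c' * ε ^ (-(N':ℝ)))) :=
          mul_le_mul_of_nonneg_right (pow_le_pow_right₀ one_le_two hl) (mul_nonneg hB hB')
      _ = 2 ^ k * (c * c') * ε ^ (-((N + N' : ℕ) : ℝ)) := by rw [← hεN]; ring

theorem prod {ι : Type*} {u : Finset ι} {f : ι → ℝ → ℝ → ℝ}
    (hf : ∀ i ∈ u, ModerateUpTo k N s (f i)) :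
    ModerateUpTo k (u.card * N) s (fun ε t => ∏ i ∈ u, f i ε t) := by
  classical
  induction u using Finset.induction with
  | empty => simpa using one
  | insert a u ha ih =>
    rw [card_insert_of_notMem ha, Nat.succ_mul, add_comm]
    simpa only [prod_insert ha] using
      (hf a (mem_insert_self a u)).mul (ih fun i hi => hf i (mem_insert_of_mem hi))

theorem of_forall_iteratedDeriv_le (hf : ∀ ε ∈ Set.Ioc (0:ℝ) 1, ContDiff ℝ (⊤ : ℕ∞) (f ε))
    (h : ∀ l : ℕ, ∃ c : ℝ, ∀ ε ∈ Set.Ioc (0:ℝ) 1, ∀ t ∈ s,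
      |iteratedDeriv l (f ε) t| ≤ c * ε ^ (-(l:ℝ))) :
    ModerateUpTo k k s f where
  contDiff := hf
  exists_bound := by
    choose c hc using h
    refine ⟨∑ l ∈ range (k + 1), |c l|, fun ε hε t ht l hl => ?_⟩
    have hεl : ε ^ (-(l:ℝ)) ≤ ε ^ (-(k:ℝ)) :=
      Real.rpow_le_rpow_of_exponent_ge hε.1 hε.2 (by simpa using hl)
    calc |iteratedDeriv l (f ε) t| ≤ c l * ε ^ (-(l:ℝ)) := hc l ε hε t ht
      _ ≤ |c l| * ε ^ (-(k:ℝ)) :=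
          mul_le_mul (le_abs_self _) hεl (Real.rpow_nonneg hε.1.le _) (abs_nonneg _)
      _ ≤ (∑ l ∈ range (k + 1), |c l|) * ε ^ (-(k:ℝ)) := by
          refine mul_le_mul_of_nonneg_right ?_ (Real.rpow_nonneg hε.1.le _)
          exact single_le_sum (fun i _ => abs_nonneg (c i)) (mem_range.mpr (Nat.lt_succ_of_le hl))

theorem exists_pos_bound (hf : ModerateUpTo k N s f) :
    ∃ c > (0:ℝ), ∀ ε ∈ Set.Ioc (0:ℝ) 1, ∀ t ∈ s, |iteratedDeriv k (f ε) t| ≤ c * ε ^ (-(N:ℝ)) := by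
  obtain ⟨c, hc⟩ := hf.exists_bound
  refine ⟨max c 1, by positivity, fun ε hε t ht => (hc ε hε t ht k le_rfl).trans ?_⟩
  exact mul_le_mul_of_nonneg_right (le_max_left c 1) (Real.rpow_nonneg hε.1.le _)

theorem of_iteratedDeriv_le_mul_norm {E : Type*} [NormedAddCommGroup E] {f : ℝ → ℝ → E → ℝ}
    (hf : ∀ ε ∈ Set.Ioc (0:ℝ) 1, ∀ ξ, ContDiff ℝ (⊤ : ℕ∞) (fun t => f ε t ξ))
    (h : ∀ l : ℕ, ∃ c : ℝ, ∀ ε ∈ Set.Ioc (0:ℝ) 1, ∀ t ∈ s, ∀ ξ, ξ ≠ 0 →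
      |iteratedDeriv l (fun τ => f ε τ ξ) t| ≤ c * ε ^ (-(l:ℝ)) * ‖ξ‖)
    (h0 : ∀ ε ∈ Set.Ioc (0:ℝ) 1, ∀ t, f ε t 0 = 0) (ξ : E) (k : ℕ) :
    ModerateUpTo k k s (fun ε t => f ε t ξ) := by
  refine of_forall_iteratedDeriv_le (fun ε hε => hf ε hε ξ) fun l => ?_
  obtain ⟨c, hc⟩ := h l
  refine ⟨c * ‖ξ‖, fun ε hε t ht => ?_⟩
  rcases eq_or_ne ξ 0 with rfl | hξ
  · have hzero : (fun τ => f ε τ 0) = 0 := funext (h0 ε hε)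
    simp [hzero]
  · rw [mul_right_comm]
    exact hc ε hε t ht ξ hξ

end ModerateUpTo

theorem regularised_coefficients_Cinf_moderate_general
    (n m : ℕ) (T : ℝ)
    (lam : Fin m → ℝ → ℝ → Vn n → ℝ)  -- `lam j ε t ξ = λ_{j,ε}(t,ξ)`
    (hlam_smooth : ∀ (j : Fin m), ∀ ε ∈ Set.Ioc (0:ℝ) 1, ∀ ξ : Vn n,
      ContDiff ℝ (⊤ : ℕ∞) (fun t => lam j ε t ξ))
    (hlam_mod : ∀ k : ℕ, ∃ c > (0:ℝ), ∀ (j : Fin m), ∀ ε ∈ Set.Ioc (0:ℝ) 1,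
      ∀ t ∈ Set.Icc (0:ℝ) T, ∀ ξ : Vn n, ξ ≠ 0 →
        |iteratedDeriv k (fun τ => lam j ε τ ξ) t| ≤ c * ε ^ (-(k:ℝ)) * ‖ξ‖)
    (hlam_hom : ∀ (j : Fin m), ∀ ε ∈ Set.Ioc (0:ℝ) 1, ∀ (t : ℝ) (r : ℝ), 0 < r → ∀ ξ : Vn n,
      lam j ε t (r • ξ) = r * lam j ε t ξ)
    (a : (Fin n → ℕ) → ℕ → ℝ → ℝ → ℝ)  -- `a ν j ε t = a_{ν,j,ε}(t)`
    (ha : ∀ j ∈ Finset.Icc 1 m, ∀ ε ∈ Set.Ioc (0:ℝ) 1, ∀ (t : ℝ) (ξ : Vn n),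
      -(∑ ν ∈ Finset.Nat.antidiagonalTuple n j, a ν j ε t * ∏ i, ξ i ^ ν i) =
        (-1) ^ j * ∑ S ∈ Finset.powersetCard j (Finset.univ : Finset (Fin m)),
          ∏ i ∈ S, lam i ε t ξ) :
    ∀ j ∈ Finset.Icc 1 m, ∀ ν ∈ Finset.Nat.antidiagonalTuple n j,
      (∀ ε ∈ Set.Ioc (0:ℝ) 1, ContDiff ℝ (⊤ : ℕ∞) (a ν j ε)) ∧
      ∀ k : ℕ, ∃ N : ℕ, ∃ c > (0:ℝ), ∀ ε ∈ Set.Ioc (0:ℝ) 1, ∀ t ∈ Set.Icc (0:ℝ) T,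
        |iteratedDeriv k (a ν j ε) t| ≤ c * ε ^ (-(N:ℝ)) := by
  have hlam_zero : ∀ i, ∀ ε ∈ Set.Ioc (0:ℝ) 1, ∀ t, lam i ε t 0 = 0 := fun i ε hε t => by
    have h := hlam_hom i ε hε t 2 two_pos 0
    rw [smul_zero] at h
    linarith
  have hlam : ∀ i ξ k, ModerateUpTo k k (Set.Icc 0 T) (fun ε t => lam i ε t ξ) := fun i =>
    .of_iteratedDeriv_le_mul_norm (hlam_smooth i) (fun l => (hlam_mod l).imp fun _ hc => hc.2 i)
      (hlam_zero i)
  intro j hj ν hν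
  obtain ⟨pts, w, hcoeff⟩ := exists_coeff_eq_sum_eval (K := ℝ) (Finset.Nat.antidiagonalTuple n j) hν
  have hrepr : ∀ ε ∈ Set.Ioc (0:ℝ) 1, a ν j ε = fun t => ∑ x ∈ pts, -w x * ((-1) ^ j *
      ∑ S ∈ powersetCard j univ, ∏ i ∈ S, lam i ε t (WithLp.toLp 2 x)) := by
    intro ε hε
    funext t
    rw [hcoeff (fun μ => a μ j ε t)]
    refine sum_congr rfl fun x _ => ?_
    rw [← ha j hj ε hε t (WithLp.toLp 2 x)]
    simp
  have hmod : ∀ k, ModerateUpTo k (j * k) (Set.Icc 0 T) (a ν j) := by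
    intro k
    refine ModerateUpTo.congr ?_ fun ε hε => (hrepr ε hε).symm
    refine .sum fun x _ => .const_mul (.const_mul (.sum fun S hS => ?_) _) _
    rw [← (mem_powersetCard.mp hS).2]
    exact .prod fun i _ => hlam i _ k
  exact ⟨fun ε hε => (hmod 0).contDiff ε hε, fun k => ⟨j * k, (hmod k).exists_pos_bound⟩⟩

/-- **Proposition 2.2, moderateness part.** Let `λ_1,…,λ_m` be real roots,
compactly supported and bounded in `t`, continuous and positively homogeneous of order `1` in
`ξ`, and let `λ_{j,ε}` be smooth-in-`t` regularisations, homogeneous of order `1` in `ξ`,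
satisfying `|d_t^k λ_{j,ε}(t,ξ)| ≤ c ε^{−k}|ξ|`. If the coefficients `a_{ν,j,ε}(t)` are defined
by `−Σ_{|ν|=j} a_{ν,j,ε}(t) ξ^ν = σ_j^{(m)}(λ_ε)(t,ξ)` for all `ξ`, then every net
`(a_{ν,j,ε})_ε` is `C^∞`-moderate: smooth in `t`, and for every `k` there are `N ∈ ℕ`, `c > 0`
with `|d_t^k a_{ν,j,ε}(t)| ≤ c ε^{−N}` on `[0,T]`, uniformly in `ε ∈ (0,1]`. -/
theorem regularised_coefficients_Cinf_moderate
    (n m : ℕ) (hn : 1 ≤ n) (hm : 1 ≤ m) (T : ℝ) (hT : 0 < T)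
    (lam0 : Fin m → ℝ → Vn n → ℝ)
    (hlam0_supp : ∀ (j : Fin m) (ξ : Vn n), HasCompactSupport (fun t => lam0 j t ξ))
    (hlam0_bdd : ∀ (j : Fin m) (ξ : Vn n), ∃ c : ℝ, ∀ t ∈ Set.Icc (0:ℝ) T, |lam0 j t ξ| ≤ c)
    (hlam0_cont : ∀ (j : Fin m) (t : ℝ), Continuous (lam0 j t))
    (hlam0_hom : ∀ (j : Fin m) (t : ℝ) (r : ℝ), 0 < r → ∀ ξ : Vn n,
      lam0 j t (r • ξ) = r * lam0 j t ξ)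
    (lam : Fin m → ℝ → ℝ → Vn n → ℝ)  -- `lam j ε t ξ = λ_{j,ε}(t,ξ)`
    (hlam_smooth : ∀ (j : Fin m), ∀ ε ∈ Set.Ioc (0:ℝ) 1, ∀ ξ : Vn n,
      ContDiff ℝ (⊤ : ℕ∞) (fun t => lam j ε t ξ))
    (hlam_mod : ∀ k : ℕ, ∃ c > (0:ℝ), ∀ (j : Fin m), ∀ ε ∈ Set.Ioc (0:ℝ) 1,
      ∀ t ∈ Set.Icc (0:ℝ) T, ∀ ξ : Vn n, ξ ≠ 0 →
        |iteratedDeriv k (fun τ => lam j ε τ ξ) t| ≤ c * ε ^ (-(k:ℝ)) * ‖ξ‖)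
    (hlam_hom : ∀ (j : Fin m), ∀ ε ∈ Set.Ioc (0:ℝ) 1, ∀ (t : ℝ) (r : ℝ), 0 < r → ∀ ξ : Vn n,
      lam j ε t (r • ξ) = r * lam j ε t ξ)
    (a : (Fin n → ℕ) → ℕ → ℝ → ℝ → ℝ)  -- `a ν j ε t = a_{ν,j,ε}(t)`
    (ha : ∀ j ∈ Finset.Icc 1 m, ∀ ε ∈ Set.Ioc (0:ℝ) 1, ∀ (t : ℝ) (ξ : Vn n),
      -(∑ ν ∈ Finset.Nat.antidiagonalTuple n j, a ν j ε t * ∏ i, ξ i ^ ν i) =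
        (-1) ^ j * ∑ S ∈ Finset.powersetCard j (Finset.univ : Finset (Fin m)),
          ∏ i ∈ S, lam i ε t ξ) :
    ∀ j ∈ Finset.Icc 1 m, ∀ ν ∈ Finset.Nat.antidiagonalTuple n j,
      (∀ ε ∈ Set.Ioc (0:ℝ) 1, ContDiff ℝ (⊤ : ℕ∞) (a ν j ε)) ∧
      ∀ k : ℕ, ∃ N : ℕ, ∃ c > (0:ℝ), ∀ ε ∈ Set.Ioc (0:ℝ) 1, ∀ t ∈ Set.Icc (0:ℝ) T,
        |iteratedDeriv k (a ν j ε) t| ≤ c * ε ^ (-(N:ℝ)) :=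
  regularised_coefficients_Cinf_moderate_general n m T lam hlam_smooth hlam_mod hlam_hom a ha
end
end

section
/- Let m ≥ 2, T > 0, ω : (0,1] → (0,∞), and for each t ∈ [0,T], ξ ∈ ℝⁿ, ε ∈ (0,1] let λ_{1,ε}(t,ξ) ≤ … ≤ λ_{m,ε}(t,ξ) be real numbers satisfying λ_{j+1,ε}(t,ξ) − λ_{j,ε}(t,ξ) ≥ ω(ε)⟨ξ⟩ for j = 1,…,m−1 and ω(ε) ≤ 1. Let S(t,ξ) be an m×m real symmetric positive semi-definite matrix with entries bounded uniformly in t ∈ [0,T], ξ ∈ ℝⁿ and ε ∈ (0,1], and with det S(t,ξ) = Π_{1≤j<i≤m} (λ_{i,ε}(t,ξ) − λ_{j,ε}(t,ξ))² ⟨ξ⟩^{−2}. Then there exist positive constants c₁ and c₂, independent of t, ξ and ε, such that c₁ ω(ε)^{m²−m} |V|² ≤ (S(t,ξ)V, V) ≤ c₂ |V|² for all t ∈ [0,T], ξ ∈ ℝⁿ, ε ∈ (0,1] and V ∈ ℂ^m. -/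
/-!
The gaps give `λ_j - λ_i ≥ ω(ε)⟨ξ⟩` for all `i < j`, so `det S ≥ ω(ε)^(m² - m)`, while the entry
bound gives `tr S ≤ mM`. The eigenvalues of `S` are nonnegative, each is at most `tr S`, and their
product is `det S`; hence the smallest one is at least `det S / (tr S)^(m-1)`. The quadratic form
lies between the smallest and the largest eigenvalue times `|V|²`, and for complex `V` it is the sum
of the real forms at `Re V` and `Im V`.
-/

noncomputable section

open MeasureTheory Real Filter Finset

open Matrix
open scoped MatrixOrder ComplexOrder

lemma div_pow_card_sub_one_le_of_le_prod {ι : Type*} [Fintype ι] [DecidableEq ι] {μ : ι → ℝ}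
    {b d : ℝ} (hμ : ∀ i, 0 ≤ μ i) (hb : ∀ i, μ i ≤ b) (hd : d ≤ ∏ i, μ i) (i : ι) :
    d / b ^ (Fintype.card ι - 1) ≤ μ i := by
  have hrest : ∏ j ∈ univ.erase i, μ j ≤ b ^ (Fintype.card ι - 1) := by
    rw [← card_univ, ← card_erase_of_mem (mem_univ i), ← prod_const]
    exact prod_le_prod (fun j _ => hμ j) (fun j _ => hb j)
  refine div_le_of_le_mul₀ (pow_nonneg ((hμ i).trans (hb i)) _) (hμ i) ?_
  calc d ≤ ∏ j, μ j := hd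
    _ = μ i * ∏ j ∈ univ.erase i, μ j := (mul_prod_erase _ _ (mem_univ i)).symm
    _ ≤ μ i * b ^ (Fintype.card ι - 1) := mul_le_mul_of_nonneg_left hrest (hμ i)

lemma two_mul_card_filter_lt {ι : Type*} [Fintype ι] [LinearOrder ι] :
    2 * #(univ.filter fun p : ι × ι => p.1 < p.2) = Fintype.card ι ^ 2 - Fintype.card ι := by
  have := card_product_filter_lt (s := (univ : Finset ι))
  rw [univ_product_univ, card_univ, Nat.choose_two_right] at this
  rw [this, Nat.mul_div_cancel' (Nat.even_mul_pred_self _).two_dvd, Nat.mul_sub_one, sq]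

lemma Monotone.le_sub_of_forall_succ {m : ℕ} {f : Fin m → ℝ} (hf : Monotone f) {δ : ℝ}
    (hgap : ∀ i j : Fin m, (i : ℕ) + 1 = j → δ ≤ f j - f i) {i j : Fin m} (hij : i < j) :
    δ ≤ f j - f i := by
  let k : Fin m := ⟨i + 1, lt_of_le_of_lt hij j.2⟩
  have hkj : f k ≤ f j := hf (Fin.mk_le_of_le_val hij)
  linarith [hgap i k rfl]

lemma pow_le_prod_sq_sub_div_sq {ι : Type*} [Fintype ι] [LinearOrder ι] {f : ι → ℝ} {w J : ℝ}
    (hw : 0 ≤ w) (hJ : 0 < J) (hgap : ∀ i j, i < j → w * J ≤ f j - f i) :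
    w ^ (Fintype.card ι ^ 2 - Fintype.card ι) ≤
      ∏ p ∈ univ.filter (fun p : ι × ι => p.1 < p.2), (f p.2 - f p.1) ^ 2 / J ^ 2 := by
  rw [← two_mul_card_filter_lt, pow_mul, ← prod_const]
  refine prod_le_prod (fun _ _ => by positivity) fun p hp => ?_
  rw [le_div_iff₀ (by positivity), ← mul_pow]
  exact pow_le_pow_left₀ (by positivity) (hgap p.1 p.2 (mem_filter.1 hp).2) 2

namespace Matrix

variable {𝕜 n : Type*} [Fintype n]

lemma re_star_dotProduct_map_ofReal_mulVec (S : Matrix n n ℝ) (V : n → ℂ) :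
    (star V ⬝ᵥ (S.map Complex.ofReal *ᵥ V)).re =
      (fun i => (V i).re) ⬝ᵥ (S *ᵥ fun i => (V i).re) +
        (fun i => (V i).im) ⬝ᵥ (S *ᵥ fun i => (V i).im) := by
  simp only [dotProduct, mulVec, map_apply, Pi.star_apply, Complex.re_sum, mul_sum,
    ← sum_add_distrib]
  refine sum_congr rfl fun i _ => sum_congr rfl fun j _ => ?_
  simp only [Complex.star_def, Complex.mul_re, Complex.conj_re, Complex.conj_im,
    Complex.ofReal_re, Complex.ofReal_im, Complex.mul_im]
  ring

variable [RCLike 𝕜] [DecidableEq n]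

lemma re_star_dotProduct_algebraMap_mulVec (c : ℝ) (x : n → 𝕜) :
    RCLike.re (star x ⬝ᵥ (algebraMap ℝ (Matrix n n 𝕜) c *ᵥ x)) = c * ∑ i, ‖x i‖ ^ 2 := by
  simp only [algebraMap_eq_diagonal, mulVec_diagonal, dotProduct, Pi.star_apply,
    Pi.algebraMap_apply, map_sum, mul_sum]
  refine sum_congr rfl fun i _ => ?_
  rw [mul_left_comm, RCLike.star_def, RCLike.conj_mul, RCLike.algebraMap_eq_ofReal,
    ← RCLike.ofReal_pow, RCLike.re_ofReal_mul, RCLike.ofReal_re]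

lemma IsHermitian.mul_sum_norm_sq_le_re_dotProduct {A : Matrix n n 𝕜} (hA : A.IsHermitian)
    {a : ℝ} (ha : ∀ i, a ≤ hA.eigenvalues i) (x : n → 𝕜) :
    a * ∑ i, ‖x i‖ ^ 2 ≤ RCLike.re (star x ⬝ᵥ (A *ᵥ x)) := by
  have hle : algebraMap ℝ _ a ≤ A := by
    rw [algebraMap_le_iff_le_spectrum hA.isSelfAdjoint, hA.spectrum_real_eq_range_eigenvalues]
    rintro _ ⟨i, rfl⟩
    exact ha i
  have := (le_iff.1 hle).re_dotProduct_nonneg x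
  rw [sub_mulVec, dotProduct_sub, map_sub, re_star_dotProduct_algebraMap_mulVec] at this
  linarith

lemma IsHermitian.re_dotProduct_le_mul_sum_norm_sq {A : Matrix n n 𝕜} (hA : A.IsHermitian)
    {b : ℝ} (hb : ∀ i, hA.eigenvalues i ≤ b) (x : n → 𝕜) :
    RCLike.re (star x ⬝ᵥ (A *ᵥ x)) ≤ b * ∑ i, ‖x i‖ ^ 2 := by
  have hle : A ≤ algebraMap ℝ _ b := by
    rw [le_algebraMap_iff_spectrum_le hA.isSelfAdjoint, hA.spectrum_real_eq_range_eigenvalues]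
    rintro _ ⟨i, rfl⟩
    exact hb i
  have := (le_iff.1 hle).re_dotProduct_nonneg x
  rw [sub_mulVec, dotProduct_sub, map_sub, re_star_dotProduct_algebraMap_mulVec] at this
  linarith

lemma PosSemidef.eigenvalues_le_re_trace {A : Matrix n n 𝕜} (hA : A.PosSemidef) (i : n) :
    hA.1.eigenvalues i ≤ RCLike.re A.trace := by
  rw [hA.1.trace_eq_sum_eigenvalues, ← RCLike.ofReal_sum, RCLike.ofReal_re]
  exact single_le_sum (fun j _ => hA.eigenvalues_nonneg j) (mem_univ i)

lemma PosSemidef.re_det_eq_prod_eigenvalues {A : Matrix n n 𝕜} (hA : A.PosSemidef) :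
    RCLike.re A.det = ∏ i, hA.1.eigenvalues i := by
  rw [hA.1.det_eq_prod_eigenvalues, ← RCLike.ofReal_prod, RCLike.ofReal_re]

lemma PosSemidef.re_dotProduct_le_of_re_trace_le {A : Matrix n n 𝕜} (hA : A.PosSemidef) {b : ℝ}
    (hb : RCLike.re A.trace ≤ b) (x : n → 𝕜) :
    RCLike.re (star x ⬝ᵥ (A *ᵥ x)) ≤ b * ∑ i, ‖x i‖ ^ 2 :=
  hA.1.re_dotProduct_le_mul_sum_norm_sq (fun i => (hA.eigenvalues_le_re_trace i).trans hb) x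

lemma PosSemidef.div_pow_mul_le_re_dotProduct {A : Matrix n n 𝕜} (hA : A.PosSemidef) {b d : ℝ}
    (hd : d ≤ RCLike.re A.det) (hb : RCLike.re A.trace ≤ b) (x : n → 𝕜) :
    d / b ^ (Fintype.card n - 1) * ∑ i, ‖x i‖ ^ 2 ≤ RCLike.re (star x ⬝ᵥ (A *ᵥ x)) :=
  hA.1.mul_sum_norm_sq_le_re_dotProduct (div_pow_card_sub_one_le_of_le_prod hA.eigenvalues_nonneg
    (fun i => (hA.eigenvalues_le_re_trace i).trans hb) (hA.re_det_eq_prod_eigenvalues ▸ hd)) x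

lemma PosSemidef.re_star_dotProduct_map_ofReal_mulVec_bounds {S : Matrix n n ℝ}
    (hS : S.PosSemidef) {b d : ℝ} (hd : d ≤ S.det) (hb : S.trace ≤ b) (V : n → ℂ) :
    d / b ^ (Fintype.card n - 1) * ∑ i, ‖V i‖ ^ 2 ≤ (star V ⬝ᵥ (S.map Complex.ofReal *ᵥ V)).re ∧
      (star V ⬝ᵥ (S.map Complex.ofReal *ᵥ V)).re ≤ b * ∑ i, ‖V i‖ ^ 2 := by
  have hnorm : ∑ i, ‖V i‖ ^ 2 = ∑ i, ‖(V i).re‖ ^ 2 + ∑ i, ‖(V i).im‖ ^ 2 := by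
    rw [← sum_add_distrib]
    refine sum_congr rfl fun i _ => ?_
    rw [Complex.sq_norm, Complex.normSq_apply, Real.norm_eq_abs, Real.norm_eq_abs, sq_abs, sq_abs]
    ring
  have hre_lo := hS.div_pow_mul_le_re_dotProduct hd hb fun i => (V i).re
  have him_lo := hS.div_pow_mul_le_re_dotProduct hd hb fun i => (V i).im
  have hre_hi := hS.re_dotProduct_le_of_re_trace_le hb fun i => (V i).re
  have him_hi := hS.re_dotProduct_le_of_re_trace_le hb fun i => (V i).im
  simp only [star_trivial, RCLike.re_to_real] at hre_lo him_lo hre_hi him_hi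
  rw [re_star_dotProduct_map_ofReal_mulVec, hnorm, mul_add, mul_add]
  exact ⟨add_le_add hre_lo him_lo, add_le_add hre_hi him_hi⟩

end Matrix

theorem symmetriser_energy_bounds_general
    (m n : ℕ) (hm : 2 ≤ m) (T : ℝ)
    (ω : ℝ → ℝ) (hω : ∀ ε ∈ Set.Ioc (0:ℝ) 1, ω ε ∈ Set.Ioc (0:ℝ) 1)
    (lam : Fin m → ℝ → ℝ → Vn n → ℝ)  -- `lam j ε t ξ = λ_{j,ε}(t,ξ)`
    (hord : ∀ (i j : Fin m), i ≤ j → ∀ ε ∈ Set.Ioc (0:ℝ) 1, ∀ t ∈ Set.Icc 0 T, ∀ ξ : Vn n,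
      lam i ε t ξ ≤ lam j ε t ξ)
    (hsep : ∀ (i j : Fin m), (i : ℕ) + 1 = (j : ℕ) →
      ∀ ε ∈ Set.Ioc (0:ℝ) 1, ∀ t ∈ Set.Icc 0 T, ∀ ξ : Vn n,
        ω ε * jap ξ ≤ lam j ε t ξ - lam i ε t ξ)
    (S : ℝ → ℝ → Vn n → Matrix (Fin m) (Fin m) ℝ)  -- `S ε t ξ`
    (hS_pos : ∀ ε ∈ Set.Ioc (0:ℝ) 1, ∀ t ∈ Set.Icc 0 T, ∀ ξ : Vn n, (S ε t ξ).PosSemidef)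
    (M : ℝ) (hM : 0 < M)
    (hS_bdd : ∀ ε ∈ Set.Ioc (0:ℝ) 1, ∀ t ∈ Set.Icc 0 T, ∀ ξ : Vn n, ∀ i j,
      |S ε t ξ i j| ≤ M)
    (hS_det : ∀ ε ∈ Set.Ioc (0:ℝ) 1, ∀ t ∈ Set.Icc 0 T, ∀ ξ : Vn n,
      (S ε t ξ).det = ∏ p ∈ Finset.univ.filter (fun p : Fin m × Fin m => p.1 < p.2),
        ((lam p.2 ε t ξ - lam p.1 ε t ξ) ^ 2 / jap ξ ^ 2)) :
    ∃ c₁ > (0:ℝ), ∃ c₂ > (0:ℝ),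
      ∀ ε ∈ Set.Ioc (0:ℝ) 1, ∀ t ∈ Set.Icc 0 T, ∀ ξ : Vn n, ∀ V : Fin m → ℂ,
        c₁ * ω ε ^ (m ^ 2 - m) * (∑ i, ‖V i‖ ^ 2) ≤
            (dotProduct (((S ε t ξ).map (Complex.ofReal)).mulVec V) (star V)).re ∧
        (dotProduct (((S ε t ξ).map (Complex.ofReal)).mulVec V) (star V)).re ≤
            c₂ * ∑ i, ‖V i‖ ^ 2 := by
  have hm0 : (0 : ℝ) < m := by exact_mod_cast (by omega : 0 < m)
  refine ⟨1 / (M * m) ^ (m - 1), by positivity, M * m, by positivity, fun ε hε t ht ξ V => ?_⟩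
  have hjap : 0 < jap ξ := Real.sqrt_pos.2 (by positivity)
  have hmono : Monotone fun j => lam j ε t ξ := fun i j hij => hord i j hij ε hε t ht ξ
  have hgap : ∀ i j : Fin m, i < j → ω ε * jap ξ ≤ lam j ε t ξ - lam i ε t ξ := fun _ _ =>
    hmono.le_sub_of_forall_succ fun i j hij => hsep i j hij ε hε t ht ξ
  have hdet : ω ε ^ (m ^ 2 - m) ≤ (S ε t ξ).det := by
    simpa only [hS_det ε hε t ht ξ, Fintype.card_fin] using
      pow_le_prod_sq_sub_div_sq (hω ε hε).1.le hjap hgap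
  have htrace : (S ε t ξ).trace ≤ M * m :=
    calc (S ε t ξ).trace ≤ ∑ _i : Fin m, M :=
          sum_le_sum fun i _ => (le_abs_self _).trans (hS_bdd ε hε t ht ξ i i)
      _ = M * m := by simp [mul_comm]
  have h := (hS_pos ε hε t ht ξ).re_star_dotProduct_map_ofReal_mulVec_bounds hdet htrace V
  rw [Fintype.card_fin] at h
  rwa [dotProduct_comm, one_div_mul_eq_div]

/-- Let `m ≥ 2`, `T > 0`, and for `t ∈ [0,T]`, `ξ ∈ ℝⁿ`, `ε ∈ (0,1]` let
`λ_{1,ε}(t,ξ) ≤ … ≤ λ_{m,ε}(t,ξ)` be real numbers with consecutive gaps `≥ ω(ε)⟨ξ⟩`, where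
`0 < ω(ε) ≤ 1`. Let `S(t,ξ)` (depending also on `ε`) be a real symmetric positive semi-definite
`m×m` matrix with uniformly bounded entries and
`det S = Π_{j<i} (λ_{i,ε} − λ_{j,ε})² ⟨ξ⟩^{−2}`. Then there are `c₁, c₂ > 0`, independent of
`t, ξ, ε`, with `c₁ ω(ε)^{m²−m} |V|² ≤ (S(t,ξ)V, V) ≤ c₂ |V|²` for all `V ∈ ℂ^m`. -/
theorem symmetriser_energy_bounds
    (m n : ℕ) (hm : 2 ≤ m) (T : ℝ) (hT : 0 < T)
    (ω : ℝ → ℝ) (hω : ∀ ε ∈ Set.Ioc (0:ℝ) 1, ω ε ∈ Set.Ioc (0:ℝ) 1)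
    (lam : Fin m → ℝ → ℝ → Vn n → ℝ)  -- `lam j ε t ξ = λ_{j,ε}(t,ξ)`
    (hord : ∀ (i j : Fin m), i ≤ j → ∀ ε ∈ Set.Ioc (0:ℝ) 1, ∀ t ∈ Set.Icc 0 T, ∀ ξ : Vn n,
      lam i ε t ξ ≤ lam j ε t ξ)
    (hsep : ∀ (i j : Fin m), (i : ℕ) + 1 = (j : ℕ) →
      ∀ ε ∈ Set.Ioc (0:ℝ) 1, ∀ t ∈ Set.Icc 0 T, ∀ ξ : Vn n,
        ω ε * jap ξ ≤ lam j ε t ξ - lam i ε t ξ)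
    (S : ℝ → ℝ → Vn n → Matrix (Fin m) (Fin m) ℝ)  -- `S ε t ξ`
    (hS_pos : ∀ ε ∈ Set.Ioc (0:ℝ) 1, ∀ t ∈ Set.Icc 0 T, ∀ ξ : Vn n, (S ε t ξ).PosSemidef)
    (M : ℝ) (hM : 0 < M)
    (hS_bdd : ∀ ε ∈ Set.Ioc (0:ℝ) 1, ∀ t ∈ Set.Icc 0 T, ∀ ξ : Vn n, ∀ i j,
      |S ε t ξ i j| ≤ M)
    (hS_det : ∀ ε ∈ Set.Ioc (0:ℝ) 1, ∀ t ∈ Set.Icc 0 T, ∀ ξ : Vn n,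
      (S ε t ξ).det = ∏ p ∈ Finset.univ.filter (fun p : Fin m × Fin m => p.1 < p.2),
        ((lam p.2 ε t ξ - lam p.1 ε t ξ) ^ 2 / jap ξ ^ 2)) :
    ∃ c₁ > (0:ℝ), ∃ c₂ > (0:ℝ),
      ∀ ε ∈ Set.Ioc (0:ℝ) 1, ∀ t ∈ Set.Icc 0 T, ∀ ξ : Vn n, ∀ V : Fin m → ℂ,
        c₁ * ω ε ^ (m ^ 2 - m) * (∑ i, ‖V i‖ ^ 2) ≤
            (dotProduct (((S ε t ξ).map (Complex.ofReal)).mulVec V) (star V)).re ∧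
        (dotProduct (((S ε t ξ).map (Complex.ofReal)).mulVec V) (star V)).re ≤
            c₂ * ∑ i, ‖V i‖ ^ 2 :=
  symmetriser_energy_bounds_general m n hm T ω hω lam hord hsep S hS_pos M hM hS_bdd hS_det
end
end

section
/- Let φ be a Schwartz function on ℝⁿ, and let χ ∈ C^∞(ℝⁿ) be bounded with all derivatives bounded, compactly supported, with χ ≡ 1 on a neighborhood of 0. Assume ω ∈ (0,1) satisfies ω|log ω| ≤ c ω^{1/2} for a fixed c > 0. Then for every q ∈ ℕ there exists c_q > 0, independent of ω and ξ, such that |∫_{ℝⁿ} e^{−iω y·ξ} φ(y) (χ(yω|log ω|) − 1) dy| ≤ c_q ω^{q/2} for all ξ ∈ ℝⁿ and all such ω. -/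
noncomputable section

open MeasureTheory Real Filter Finset

open scoped RealInnerProductSpace

/-! Away from the origin, where `χ - 1` vanishes, the bounded function `χ - 1` is dominated by
`C |z|^q` for every `q`. Hence the integrand is bounded by `C (ω |log ω|)^q |y|^q |φ(y)|`, which is
integrable because `φ` is Schwartz, and `(ω |log ω|)^q ≤ c^q ω^{q/2}`. -/

theorem exists_norm_le_mul_norm_pow_of_eventually_eq_zero {E F : Type*}
    [SeminormedAddCommGroup E] [SeminormedAddCommGroup F] {g : E → F} {M : ℝ}
    (hg : ∀ x, ‖g x‖ ≤ M) (h0 : ∀ᶠ x in nhds 0, g x = 0) (q : ℕ) :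
    ∃ C, 0 ≤ C ∧ ∀ x, ‖g x‖ ≤ C * ‖x‖ ^ q := by
  obtain ⟨δ, hδ, hδg⟩ := Metric.eventually_nhds_iff.mp h0
  have hM : 0 ≤ M := (norm_nonneg _).trans (hg 0)
  refine ⟨M / δ ^ q, by positivity, fun x => ?_⟩
  rcases lt_or_ge ‖x‖ δ with hx | hx
  · rw [hδg (by simpa using hx), norm_zero]
    positivity
  · calc ‖g x‖ ≤ M / δ ^ q * δ ^ q := by rw [div_mul_cancel₀ _ (by positivity)]; exact hg x
      _ ≤ M / δ ^ q * ‖x‖ ^ q := by gcongr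

theorem norm_integral_mul_comp_smul_le {E : Type*} [NormedAddCommGroup E] [NormedSpace ℝ E]
    [MeasurableSpace E] [BorelSpace E] [SecondCountableTopology E]
    (μ : Measure E) [μ.HasTemperateGrowth] (φ : SchwartzMap E ℂ) {e g : E → ℂ}
    (he : ∀ y, ‖e y‖ ≤ 1) {C : ℝ} {q : ℕ} (hg : ∀ z, ‖g z‖ ≤ C * ‖z‖ ^ q)
    {r : ℝ} (hr : 0 ≤ r) :
    ‖∫ y, e y * φ y * g (r • y) ∂μ‖ ≤ C * r ^ q * ∫ y, ‖y‖ ^ q * ‖φ y‖ ∂μ := by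
  have hpointwise : ∀ y, ‖e y * φ y * g (r • y)‖ ≤ C * r ^ q * (‖y‖ ^ q * ‖φ y‖) := fun y =>
    calc ‖e y * φ y * g (r • y)‖ ≤ 1 * ‖φ y‖ * (C * ‖r • y‖ ^ q) := by
          rw [norm_mul, norm_mul]
          gcongr
          exacts [he y, hg _]
      _ = C * r ^ q * (‖y‖ ^ q * ‖φ y‖) := by
          rw [norm_smul, Real.norm_of_nonneg hr, mul_pow]; ring
  rw [← integral_const_mul]
  exact norm_integral_le_of_norm_le ((φ.integrable_pow_mul μ q).const_mul _)
    (.of_forall hpointwise)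

theorem pow_le_mul_rpow_of_le_mul_sqrt {r c ω : ℝ} (hr : 0 ≤ r) (hω : 0 ≤ ω)
    (h : r ≤ c * ω ^ ((1 : ℝ) / 2)) (q : ℕ) :
    r ^ q ≤ c ^ q * ω ^ ((q : ℝ) / 2) := by
  rw [div_eq_mul_one_div (q : ℝ), mul_comm (q : ℝ), Real.rpow_mul_natCast hω, ← mul_pow]
  exact pow_le_pow_left₀ hr h q

theorem cutoff_error_estimate_general
    (n : ℕ) (φ : SchwartzMap (Vn n) ℂ)
    (χ : Vn n → ℝ)
    (hχbdd : ∀ k : ℕ, ∃ Ck : ℝ, ∀ x : Vn n, ‖iteratedFDeriv ℝ k χ x‖ ≤ Ck)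
    (hχ1 : ∀ᶠ x in nhds (0 : Vn n), χ x = 1)
    (c : ℝ) (hc : 0 < c) :
    ∀ q : ℕ, ∃ cq > (0:ℝ), ∀ ω : ℝ, ω ∈ Set.Ioo (0:ℝ) 1 →
      ω * |Real.log ω| ≤ c * ω ^ ((1:ℝ)/2) →
      ∀ ξ : Vn n,
        ‖∫ y : Vn n, Complex.exp (-Complex.I * ((ω * ⟪y, ξ⟫) : ℝ)) * φ y *
            (((χ ((ω * |Real.log ω|) • y) : ℝ) : ℂ) - 1)‖ ≤ cq * ω ^ ((q : ℝ)/2) := by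
  intro q
  obtain ⟨M, hM⟩ := hχbdd 0
  have hχ_sub_bdd : ∀ x, ‖((χ x : ℂ) - 1)‖ ≤ M + 1 := fun x => by
    have hMx := hM x
    rw [norm_iteratedFDeriv_zero] at hMx
    calc ‖((χ x : ℂ) - 1)‖ ≤ ‖(χ x : ℂ)‖ + ‖(1 : ℂ)‖ := norm_sub_le _ _
      _ ≤ M + 1 := by simpa using hMx
  obtain ⟨C, hC, hχ_sub⟩ := exists_norm_le_mul_norm_pow_of_eventually_eq_zero hχ_sub_bdd
    (hχ1.mono fun x hx => by simp [hx]) q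
  set I := ∫ y : Vn n, ‖y‖ ^ q * ‖φ y‖
  have hI : 0 ≤ I := integral_nonneg fun y => by positivity
  refine ⟨C * c ^ q * I + 1, by positivity, fun ω hω hωc ξ => ?_⟩
  have hr : 0 ≤ ω * |Real.log ω| := by have := hω.1; positivity
  have hphase : ∀ y : Vn n, ‖Complex.exp (-Complex.I * ((ω * ⟪y, ξ⟫) : ℝ))‖ ≤ 1 := fun y => by
    rw [Complex.norm_exp]; simp
  calc _ ≤ C * (ω * |Real.log ω|) ^ q * I :=
        norm_integral_mul_comp_smul_le volume φ hphase hχ_sub hr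
    _ ≤ C * (c ^ q * ω ^ ((q : ℝ) / 2)) * I := by
        gcongr; exact pow_le_mul_rpow_of_le_mul_sqrt hr hω.1.le hωc q
    _ ≤ (C * c ^ q * I + 1) * ω ^ ((q : ℝ) / 2) := by
        have : 0 ≤ ω ^ ((q : ℝ) / 2) := by have := hω.1; positivity
        nlinarith

/-- Let `φ` be Schwartz on `ℝⁿ` and let `χ` be smooth, bounded with all
derivatives bounded, compactly supported, `χ ≡ 1` near `0`. If `ω ∈ (0,1)` satisfies
`ω|log ω| ≤ c ω^{1/2}` for a fixed `c > 0`, then for every `q ∈ ℕ` there is `c_q > 0`,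
independent of `ω` and `ξ`, with
`|∫ e^{−iω y·ξ} φ(y) (χ(y ω|log ω|) − 1) dy| ≤ c_q ω^{q/2}`. -/
theorem cutoff_error_estimate
    (n : ℕ) (φ : SchwartzMap (Vn n) ℂ)
    (χ : Vn n → ℝ) (hχ : ContDiff ℝ (⊤ : ℕ∞) χ)
    (hχbdd : ∀ k : ℕ, ∃ Ck : ℝ, ∀ x : Vn n, ‖iteratedFDeriv ℝ k χ x‖ ≤ Ck)
    (hχc : HasCompactSupport χ)
    (hχ1 : ∀ᶠ x in nhds (0 : Vn n), χ x = 1)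
    (c : ℝ) (hc : 0 < c) :
    ∀ q : ℕ, ∃ cq > (0:ℝ), ∀ ω : ℝ, ω ∈ Set.Ioo (0:ℝ) 1 →
      ω * |Real.log ω| ≤ c * ω ^ ((1:ℝ)/2) →
      ∀ ξ : Vn n,
        ‖∫ y : Vn n, Complex.exp (-Complex.I * ((ω * ⟪y, ξ⟫) : ℝ)) * φ y *
            (((χ ((ω * |Real.log ω|) • y) : ℝ) : ℂ) - 1)‖ ≤ cq * ω ^ ((q : ℝ)/2) :=
  cutoff_error_estimate_general n φ χ hχbdd hχ1 c hc
end
end
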